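/- arXiv:2008.06137 — 2 statements merged into one kernel-verified Lean document; each statement's English description precedes it below -/
import Mathlib

section
/- Let m be a positive integer, K ≥ 0 and α > 0 real numbers. Then ∫₀^∞ f_G(x, m) (∫₀^{αx} f_R(y, K) dy) dx = 1 − (m^m e^{−K} / (Γ(m) (m + α(K+1))^m)) · Σ_{j=0}^∞ (K^j / j!) Σ_{k=0}^j (Γ(k+m)/k!) · (α(K+1)/(m + α(K+1)))^k, where the left-hand side is the probability O_{L,N}(α) that a unit-mean Rician variable with shape K is less than α times an independent unit-mean Gamma variable with shape m. -/
open Real MeasureTheory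

/-- Modified Bessel function of the first kind of order zero. -/
noncomputable def besselI0 (z : ℝ) : ℝ :=
  ∑' k : ℕ, (z / 2) ^ (2 * k) / ((Nat.factorial k : ℝ)) ^ 2

/-- Unit-mean Nakagami-m (Gamma) density with shape parameter `s`. -/
noncomputable def fG (s x : ℝ) : ℝ :=
  if 0 < x then s ^ s * x ^ (s - 1) * Real.exp (-s * x) / Real.Gamma s else 0

/-- Unit-mean Rician density with shape factor `K`. -/
noncomputable def fR (K y : ℝ) : ℝ :=
  if 0 < y then
    (K + 1) * Real.exp (-K - (K + 1) * y) * besselI0 (Real.sqrt (4 * K * (K + 1) * y))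
  else 0

/-!
Expanding `I₀`, the Rician density is a Poisson(`K`) mixture of Erlang densities of rate `K + 1`,
`f_R(y) = ∑ⱼ e^{-K} Kʲ/j! · (K+1) e^{-(K+1)y} ((K+1)y)ʲ/j!`, and the Erlang CDF is a Poisson tail:
`∫₀ᵀ e^{-u} uʲ/j! du = 1 - ∑_{k ≤ j} e^{-T} Tᵏ/k!`. Averaging the Poisson probability
`e^{-cx} (cx)ᵏ/k!`, `c = α(K+1)`, against the Gamma density gives negative binomial weights.
All terms are nonnegative, so every sum commutes with every integral.
-/

open Set
open scoped Nat

noncomputable def poissonWeight (r : ℝ) (n : ℕ) : ℝ :=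
  exp (-r) * (r ^ n / n !)

section PoissonWeight

lemma poissonWeight_nonneg {r : ℝ} (hr : 0 ≤ r) (n : ℕ) : 0 ≤ poissonWeight r n := by
  unfold poissonWeight
  positivity

@[fun_prop]
lemma continuous_poissonWeight (n : ℕ) : Continuous (poissonWeight · n) := by
  unfold poissonWeight
  fun_prop

lemma hasSum_poissonWeight (r : ℝ) : HasSum (poissonWeight r) 1 := by
  have h := (NormedSpace.expSeries_div_hasSum_exp r).mul_left (exp (-r))
  rwa [← Real.exp_eq_exp_ℝ, ← Real.exp_add, neg_add_cancel, Real.exp_zero] at h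

lemma one_sub_sum_range_poissonWeight_nonneg {r : ℝ} (hr : 0 ≤ r) (n : ℕ) :
    0 ≤ 1 - ∑ k ∈ Finset.range n, poissonWeight r k :=
  sub_nonneg.2 <| sum_le_hasSum _ (fun k _ => poissonWeight_nonneg hr k) (hasSum_poissonWeight r)

lemma one_sub_sum_range_poissonWeight_le_one {r : ℝ} (hr : 0 ≤ r) (n : ℕ) :
    1 - ∑ k ∈ Finset.range n, poissonWeight r k ≤ 1 :=
  sub_le_self _ <| Finset.sum_nonneg fun k _ => poissonWeight_nonneg hr k

lemma hasDerivAt_poissonWeight_succ (n : ℕ) (t : ℝ) :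
    HasDerivAt (poissonWeight · (n + 1)) (poissonWeight t n - poissonWeight t (n + 1)) t := by
  have hpow : HasDerivAt (fun t => t ^ (n + 1) / (n + 1)! : ℝ → ℝ) (t ^ n / n !) t := by
    refine ((hasDerivAt_pow (n + 1) t).div_const ((n + 1)! : ℝ)).congr_deriv ?_
    rw [Nat.factorial_succ]
    push_cast
    field_simp
  refine ((hasDerivAt_neg t).exp.mul hpow).congr_deriv ?_
  unfold poissonWeight
  ring

lemma hasDerivAt_sum_range_poissonWeight (n : ℕ) (t : ℝ) :
    HasDerivAt (fun t => ∑ k ∈ Finset.range (n + 1), poissonWeight t k) (-poissonWeight t n) t := by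
  induction n with
  | zero => simpa [poissonWeight] using (hasDerivAt_neg t).exp
  | succ n ih =>
    simp_rw [Finset.sum_range_succ _ (n + 1)]
    exact (ih.add (hasDerivAt_poissonWeight_succ n t)).congr_deriv (by ring)

lemma sum_range_poissonWeight_zero (n : ℕ) :
    ∑ k ∈ Finset.range (n + 1), poissonWeight 0 k = 1 := by
  simp [Finset.sum_range_succ', poissonWeight]

lemma integral_poissonWeight (n : ℕ) (T : ℝ) :
    ∫ t in 0..T, poissonWeight t n = 1 - ∑ k ∈ Finset.range (n + 1), poissonWeight T k := by
  have hderiv : ∀ t, HasDerivAt (fun t => -∑ k ∈ Finset.range (n + 1), poissonWeight t k)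
      (poissonWeight t n) t := fun t => by
    simpa using (hasDerivAt_sum_range_poissonWeight n t).fun_neg
  rw [intervalIntegral.integral_eq_sub_of_hasDerivAt (fun t _ => hderiv t)
    ((continuous_poissonWeight n).intervalIntegrable _ _), sum_range_poissonWeight_zero]
  ring

end PoissonWeight

lemma summable_mul_of_nonneg_of_le_one {ι : Type*} {w t : ι → ℝ} (hw : Summable w)
    (hw0 : ∀ i, 0 ≤ w i) (ht0 : ∀ i, 0 ≤ t i) (ht1 : ∀ i, t i ≤ 1) :
    Summable fun i => w i * t i :=
  hw.of_nonneg_of_le (fun i => mul_nonneg (hw0 i) (ht0 i))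
    fun i => mul_le_of_le_one_right (hw0 i) (ht1 i)

lemma integral_tsum_of_nonneg {α ι : Type*} [MeasurableSpace α] [Countable ι] {μ : Measure α}
    {F : ι → α → ℝ} (hF : ∀ i, Integrable (F i) μ) (hF0 : ∀ i, 0 ≤ᵐ[μ] F i)
    (hsum : Summable fun i => ∫ a, F i a ∂μ) :
    ∫ a, ∑' i, F i a ∂μ = ∑' i, ∫ a, F i a ∂μ := by
  refine (integral_tsum_of_summable_integral_norm hF (hsum.congr fun i => ?_)).symm
  exact integral_congr_ae <| (hF0 i).mono fun a ha => (Real.norm_of_nonneg ha).symm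

section Rician

lemma fR_eq_tsum_poissonWeight {K y : ℝ} (hK : 0 ≤ K) (hy : 0 < y) :
    fR K y = ∑' j, poissonWeight K j * ((K + 1) * poissonWeight ((K + 1) * y) j) := by
  rw [fR, if_pos hy, besselI0, ← tsum_mul_left]
  refine tsum_congr fun j => ?_
  have hsq : (√(4 * K * (K + 1) * y) / 2) ^ (2 * j) = (K * ((K + 1) * y)) ^ j := by
    rw [pow_mul, div_pow, sq_sqrt (by positivity)]
    ring
  have hexp : exp (-K - (K + 1) * y) = exp (-K) * exp (-((K + 1) * y)) := by
    rw [← Real.exp_add, sub_eq_add_neg]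
  rw [hsq, hexp, mul_pow, poissonWeight, poissonWeight]
  ring

lemma integral_Ioo_fR {K T : ℝ} (hK : 0 ≤ K) (hT : 0 ≤ T) :
    ∫ y in Ioo 0 T, fR K y =
      ∑' j, poissonWeight K j *
        (1 - ∑ k ∈ Finset.range (j + 1), poissonWeight ((K + 1) * T) k) := by
  set F : ℕ → ℝ → ℝ := fun j y => poissonWeight K j * ((K + 1) * poissonWeight ((K + 1) * y) j)
  have hFcont : ∀ j, Continuous (F j) := fun j => by fun_prop
  have hF0 : ∀ j, 0 ≤ᵐ[volume.restrict (Ioo 0 T)] F j := fun j =>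
    ae_restrict_of_forall_mem measurableSet_Ioo fun y hy =>
      mul_nonneg (poissonWeight_nonneg hK j)
        (mul_nonneg (by linarith) (poissonWeight_nonneg (mul_nonneg (by linarith) hy.1.le) j))
  have hFint : ∀ j, ∫ y in Ioo 0 T, F j y =
      poissonWeight K j * (1 - ∑ k ∈ Finset.range (j + 1), poissonWeight ((K + 1) * T) k) := by
    intro j
    have hscale : ∫ y in 0..T, (K + 1) * poissonWeight ((K + 1) * y) j =
        ∫ u in 0..(K + 1) * T, poissonWeight u j := by
      simpa using intervalIntegral.smul_integral_comp_mul_left (fun u => poissonWeight u j) (K + 1)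
        (a := 0) (b := T)
    rw [integral_const_mul, ← integral_Ioc_eq_integral_Ioo, ← intervalIntegral.integral_of_le hT,
      hscale, integral_poissonWeight]
  calc ∫ y in Ioo 0 T, fR K y = ∫ y in Ioo 0 T, ∑' j, F j y :=
        setIntegral_congr_fun measurableSet_Ioo fun y hy => fR_eq_tsum_poissonWeight hK hy.1
    _ = ∑' j, ∫ y in Ioo 0 T, F j y := by
        refine integral_tsum_of_nonneg
          (fun j => (hFcont j).integrableOn_Icc.mono_set Ioo_subset_Icc_self) hF0 ?_
        simp_rw [hFint]
        exact summable_mul_of_nonneg_of_le_one (hasSum_poissonWeight K).summable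
          (poissonWeight_nonneg hK)
          (fun j => one_sub_sum_range_poissonWeight_nonneg (by positivity) _)
          (fun j => one_sub_sum_range_poissonWeight_le_one (by positivity) _)
    _ = _ := tsum_congr hFint

end Rician

section Gamma

lemma fG_nonneg {s : ℝ} (hs : 0 ≤ s) (x : ℝ) : 0 ≤ fG s x := by
  unfold fG
  split_ifs
  · have := Real.Gamma_nonneg_of_nonneg hs
    positivity
  · exact le_rfl

lemma integrableOn_rpow_mul_exp_neg_mul_Ioi {a r : ℝ} (ha : 0 < a) (hr : 0 < r) :
    IntegrableOn (fun t => t ^ (a - 1) * exp (-(r * t))) (Ioi 0) :=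
  Integrable.of_integral_ne_zero <| by
    rw [integral_rpow_mul_exp_neg_mul_Ioi ha hr]
    positivity

lemma fG_mul_poissonWeight_eq {s c x : ℝ} (hx : 0 < x) (k : ℕ) :
    fG s x * poissonWeight (c * x) k =
      s ^ s * c ^ k / (Gamma s * k !) * (x ^ (s + k - 1) * exp (-((s + c) * x))) := by
  have hpow : x ^ (s + k - 1) = x ^ (s - 1) * x ^ k := by
    rw [← Real.rpow_natCast, ← Real.rpow_add hx]
    ring_nf
  have hexp : exp (-((s + c) * x)) = exp (-s * x) * exp (-(c * x)) := by
    rw [← Real.exp_add]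
    ring_nf
  rw [fG, if_pos hx, poissonWeight, hpow, hexp, mul_pow]
  ring

variable {s c : ℝ}

lemma integrableOn_fG_mul_poissonWeight (hs : 0 < s) (hc : 0 ≤ c) (k : ℕ) :
    IntegrableOn (fun x => fG s x * poissonWeight (c * x) k) (Ioi 0) :=
  IntegrableOn.congr_fun
    ((integrableOn_rpow_mul_exp_neg_mul_Ioi (a := s + k) (r := s + c) (by positivity)
      (by linarith)).const_mul _)
    (fun _ hx => (fG_mul_poissonWeight_eq hx k).symm) measurableSet_Ioi

/-- The law of a Poisson variable whose rate is `c` times a unit-mean Gamma(`s`) variable: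
the negative binomial distribution. -/
noncomputable def negBinomialWeight (s c : ℝ) (k : ℕ) : ℝ :=
  s ^ s * c ^ k * Gamma (s + k) / (Gamma s * k ! * (s + c) ^ (s + k))

lemma negBinomialWeight_nonneg (hs : 0 < s) (hc : 0 ≤ c) (k : ℕ) : 0 ≤ negBinomialWeight s c k := by
  have : 0 < s + c := by linarith
  unfold negBinomialWeight
  positivity

lemma integral_fG_mul_poissonWeight (hs : 0 < s) (hc : 0 ≤ c) (k : ℕ) :
    ∫ x in Ioi 0, fG s x * poissonWeight (c * x) k = negBinomialWeight s c k := by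
  have hsc : 0 < s + c := by linarith
  rw [setIntegral_congr_fun measurableSet_Ioi fun _ hx => fG_mul_poissonWeight_eq hx k,
    integral_const_mul, integral_rpow_mul_exp_neg_mul_Ioi (by positivity) hsc,
    Real.div_rpow zero_le_one hsc.le, Real.one_rpow, negBinomialWeight]
  have := Real.Gamma_pos_of_pos hs
  field_simp

lemma integrableOn_fG (hs : 0 < s) : IntegrableOn (fG s) (Ioi 0) := by
  simpa [poissonWeight] using integrableOn_fG_mul_poissonWeight hs le_rfl 0

lemma integral_fG (hs : 0 < s) : ∫ x in Ioi 0, fG s x = 1 := by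
  have h : ∫ x in Ioi 0, fG s x = s ^ s * Gamma s / (Gamma s * s ^ s) := by
    simpa [poissonWeight, negBinomialWeight] using integral_fG_mul_poissonWeight hs le_rfl 0
  have := Real.Gamma_pos_of_pos hs
  rw [h, mul_comm, div_self (by positivity)]

lemma integrableOn_fG_mul_one_sub_sum_poissonWeight (hs : 0 < s) (hc : 0 ≤ c) (n : ℕ) :
    IntegrableOn (fun x => fG s x * (1 - ∑ k ∈ Finset.range n, poissonWeight (c * x) k))
      (Ioi 0) := by
  simp_rw [mul_sub, mul_one, Finset.mul_sum]
  exact (integrableOn_fG hs).sub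
    (integrable_finsetSum _ fun k _ => integrableOn_fG_mul_poissonWeight hs hc k)

lemma integral_fG_mul_one_sub_sum_poissonWeight (hs : 0 < s) (hc : 0 ≤ c) (n : ℕ) :
    ∫ x in Ioi 0, fG s x * (1 - ∑ k ∈ Finset.range n, poissonWeight (c * x) k) =
      1 - ∑ k ∈ Finset.range n, negBinomialWeight s c k := by
  have hint : ∀ k ∈ Finset.range n,
      IntegrableOn (fun x => fG s x * poissonWeight (c * x) k) (Ioi 0) :=
    fun k _ => integrableOn_fG_mul_poissonWeight hs hc k
  simp_rw [mul_sub, mul_one, Finset.mul_sum]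
  rw [integral_sub (integrableOn_fG hs) (integrable_finsetSum _ hint), integral_fG hs,
    integral_finsetSum _ hint]
  simp_rw [integral_fG_mul_poissonWeight hs hc]

end Gamma

theorem integral_fG_mul_integral_Ioo_fR {s K α : ℝ} (hs : 0 < s) (hK : 0 ≤ K) (hα : 0 ≤ α) :
    ∫ x in Ioi 0, fG s x * ∫ y in Ioo 0 (α * x), fR K y =
      1 - ∑' j, poissonWeight K j *
        ∑ k ∈ Finset.range (j + 1), negBinomialWeight s (α * (K + 1)) k := by
  set c := α * (K + 1)
  have hc : 0 ≤ c := by positivity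
  set N : ℕ → ℝ := fun j => ∑ k ∈ Finset.range (j + 1), negBinomialWeight s c k
  set F : ℕ → ℝ → ℝ := fun j x =>
    poissonWeight K j * (fG s x * (1 - ∑ k ∈ Finset.range (j + 1), poissonWeight (c * x) k))
  have hF0 : ∀ j, ∀ x ∈ Ioi (0 : ℝ), 0 ≤ F j x := fun j x hx =>
    mul_nonneg (poissonWeight_nonneg hK j) <| mul_nonneg (fG_nonneg hs.le x)
      (one_sub_sum_range_poissonWeight_nonneg (mul_nonneg hc (le_of_lt hx)) _)
  have hFint : ∀ j, ∫ x in Ioi 0, F j x = poissonWeight K j * (1 - N j) := fun j => by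
    rw [integral_const_mul, integral_fG_mul_one_sub_sum_poissonWeight hs hc]
  have hN0 : ∀ j, 0 ≤ N j := fun j => Finset.sum_nonneg fun k _ => negBinomialWeight_nonneg hs hc k
  have hN1 : ∀ j, N j ≤ 1 := fun j => by
    have := setIntegral_nonneg (μ := volume) measurableSet_Ioi fun x hx =>
      mul_nonneg (fG_nonneg hs.le x)
        (one_sub_sum_range_poissonWeight_nonneg (mul_nonneg hc (le_of_lt hx)) (j + 1))
    rw [integral_fG_mul_one_sub_sum_poissonWeight hs hc] at this
    linarith
  have hw := (hasSum_poissonWeight K).summable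
  calc ∫ x in Ioi 0, fG s x * ∫ y in Ioo 0 (α * x), fR K y = ∫ x in Ioi 0, ∑' j, F j x := by
        refine setIntegral_congr_fun measurableSet_Ioi fun x hx => ?_
        rw [integral_Ioo_fR hK (mul_nonneg hα (le_of_lt hx)), ← tsum_mul_left]
        refine tsum_congr fun j => ?_
        simp only [F, show (K + 1) * (α * x) = c * x by ring]
        ring
    _ = ∑' j, poissonWeight K j * (1 - N j) := by
        rw [integral_tsum_of_nonneg _
          (fun j => ae_restrict_of_forall_mem measurableSet_Ioi (hF0 j))]
        · exact tsum_congr hFint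
        · simp_rw [hFint]
          exact summable_mul_of_nonneg_of_le_one hw (poissonWeight_nonneg hK)
            (fun j => sub_nonneg.2 (hN1 j)) (fun j => sub_le_self _ (hN0 j))
        · exact fun j => (integrableOn_fG_mul_one_sub_sum_poissonWeight hs hc _).const_mul _
    _ = 1 - ∑' j, poissonWeight K j * N j := by
        simp_rw [mul_sub, mul_one]
        rw [Summable.tsum_sub hw
            (summable_mul_of_nonneg_of_le_one hw (poissonWeight_nonneg hK) hN0 hN1),
          (hasSum_poissonWeight K).tsum_eq]

/-- Appendix A, intermediate double-series form of the outage probability `O_{L,N}(α)`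
(LoS Rician desired link with shape `K`, NLoS Nakagami interference with integer shape `m`). -/
theorem outage_L_N_series (m : ℕ) (hm : 0 < m) (K α : ℝ) (hK : 0 ≤ K) (hα : 0 < α) :
    (∫ x in Set.Ioi (0 : ℝ), fG (m : ℝ) x * ∫ y in Set.Ioo 0 (α * x), fR K y) =
      1 - ((m : ℝ) ^ (m : ℕ) * Real.exp (-K) /
            (Real.Gamma m * ((m : ℝ) + α * (K + 1)) ^ (m : ℕ))) *
        ∑' j : ℕ, (K ^ j / (Nat.factorial j : ℝ)) *
          ∑ k ∈ Finset.range (j + 1),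
            (Real.Gamma ((k : ℝ) + m) / (Nat.factorial k : ℝ)) *
              (α * (K + 1) / ((m : ℝ) + α * (K + 1))) ^ k := by
  have hm0 : (0 : ℝ) < m := Nat.cast_pos.2 hm
  rw [integral_fG_mul_integral_Ioo_fR hm0 hK hα.le, ← tsum_mul_left]
  congr 2
  funext j
  rw [Finset.mul_sum, Finset.mul_sum, Finset.mul_sum]
  refine Finset.sum_congr rfl fun k _ => ?_
  have hGm := Real.Gamma_pos_of_pos hm0
  rw [negBinomialWeight, poissonWeight, Real.rpow_natCast, ← Nat.cast_add, Real.rpow_natCast,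
    pow_add, div_pow, Nat.cast_add, add_comm (m : ℝ) k]
  field_simp
end

section
/- Let m be a positive integer, K ≥ 0, α > 0, and let γ > 0 satisfy m α γ < K + 1. Define O_{N,L}(β) = ∫₀^∞ f_R(x, K) (∫₀^{βx} f_G(y, m) dy) dx for β > 0 (the probability that a unit-mean Gamma variable with shape m is less than β times an independent unit-mean Rician variable with shape K). Then ∫₀^γ O_{N,L}(α t) dt = (e^{−K} (m α)^m γ^{m+1} / (Γ(m) (K+1)^m (m+1))) · Σ_{j=0}^∞ (K^j / j!) Σ_{k=0}^j (Γ(k+m)/k!) · ₂F₁(m+1, m+k; m+2; −m α γ / (K+1)), where ₂F₁(a, b; c; z) = Σ_{n=0}^∞ ((a)_n (b)_n / (c)_n) z^n / n! is the Gauss hypergeometric series (convergent since |−mαγ/(K+1)| < 1) and (q)_n denotes the Pochhammer symbol. -/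
open Real MeasureTheory intervalIntegral

/-- Outage probability `O_{N,L}(β)`: probability that a unit-mean Gamma variable of shape `m`
is less than `β` times an independent unit-mean Rician variable of shape `K`. -/
noncomputable def O_NL (m : ℕ) (K : ℝ) (β : ℝ) : ℝ :=
  ∫ x in Set.Ioi (0 : ℝ), fR K x * ∫ y in Set.Ioo 0 (β * x), fG (m : ℝ) y

/-- The Gauss hypergeometric series `₂F₁(a, b; c; z)` (with Pochhammer symbols). -/
noncomputable def hyp2F1 (a b c z : ℝ) : ℝ :=
  ∑' n : ℕ,
    ((ascPochhammer ℝ n).eval a * (ascPochhammer ℝ n).eval b /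
        (ascPochhammer ℝ n).eval c) * z ^ n / (Nat.factorial n : ℝ)

/-!
Expanding `I₀` writes the Rician density as a mixture `∑ⱼ aⱼ xʲ e^{-(K+1)x}` of Gamma kernels
whose weights satisfy `aⱼ j!/(K+1)^{j+1} = e^{-K} Kʲ/j!`, so `O_NL(β)` is a series of triangle
integrals `∫₀^∞ xʲ e^{-(K+1)x} ∫₀^{βx} y^{m-1} e^{-my} dy dx`. Integrating over `x > y/β` first
gives an upper incomplete Gamma function of integer order, an exponential times a polynomial
in `y`, and each triangle integral becomes the finite sum
`j!/r^{j+1} ∑_{k ≤ j} (m-1+k)!/k! (β/r)^m (1 + mβ/r)^{-(m+k)}` with `r = K + 1`.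
For `β = α t`, integrating `t^m (1 + z t)^{-(m+k)}` over `[0, γ]` term by term in the negative
binomial series gives Euler's series for `₂F₁(m+1, m+k; m+2; -zγ)`, which converges because
`zγ = mαγ/(K+1) < 1`. Every interchange of a sum and an integral is dominated: a triangle
integral is bounded, uniformly in `β`, by the product of the two complete Gamma integrals.
-/

open scoped Nat
open Finset

section TermwiseIntegration

variable {α E : Type*} [MeasurableSpace α] {μ : Measure α} [NormedAddCommGroup E] [NormedSpace ℝ E]

theorem integral_tsum_of_norm_le {F : ℕ → α → E} {G : ℕ → α → ℝ}
    (hF : ∀ n, AEStronglyMeasurable (F n) μ) (hG : ∀ n, Integrable (G n) μ)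
    (hFG : ∀ n, ∀ᵐ x ∂μ, ‖F n x‖ ≤ G n x) (hsum : Summable fun n => ∫ x, G n x ∂μ) :
    ∫ x, ∑' n, F n x ∂μ = ∑' n, ∫ x, F n x ∂μ := by
  have hFint n : Integrable (F n) μ := (hG n).mono' (hF n) (hFG n)
  have hsumF : Summable fun n => ∫ x, ‖F n x‖ ∂μ :=
    hsum.of_nonneg_of_le (fun n => integral_nonneg fun x => norm_nonneg _) fun n =>
      integral_mono_ae (hFint n).norm (hG n) (hFG n)
  exact (integral_tsum_of_summable_integral_norm hFint hsumF).symm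

theorem integral_tsum_of_norm_le_const [IsFiniteMeasure μ] {F : ℕ → α → E} {M : ℕ → ℝ}
    (hF : ∀ n, AEStronglyMeasurable (F n) μ) (hFM : ∀ n, ∀ᵐ x ∂μ, ‖F n x‖ ≤ M n)
    (hM : Summable M) :
    ∫ x, ∑' n, F n x ∂μ = ∑' n, ∫ x, F n x ∂μ :=
  integral_tsum_of_norm_le hF (fun n => integrable_const (M n)) hFM <| by
    simpa only [MeasureTheory.integral_const, smul_eq_mul] using hM.mul_left (μ.real Set.univ)

end TermwiseIntegration

theorem integrableOn_pow_mul_exp_neg_mul (n : ℕ) {r : ℝ} (hr : 0 < r) :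
    IntegrableOn (fun x : ℝ => x ^ n * exp (-(r * x))) (Set.Ioi 0) := by
  simpa only [Real.rpow_one, Real.rpow_natCast, neg_mul] using
    integrableOn_rpow_mul_exp_neg_mul_rpow (s := n) (p := 1) (by linarith [n.cast_nonneg (α := ℝ)])
      one_pos hr

theorem integral_pow_mul_exp_neg_mul_Ioi_zero (n : ℕ) {r : ℝ} (hr : 0 < r) :
    ∫ x in Set.Ioi (0 : ℝ), x ^ n * exp (-(r * x)) = n ! / r ^ (n + 1) := by
  have h := Real.integral_rpow_mul_exp_neg_mul_Ioi (a := n + 1) (by positivity) hr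
  rw [add_sub_cancel_right, Real.Gamma_nat_eq_factorial, ← Nat.cast_add_one] at h
  simp_rw [Real.rpow_natCast] at h
  rw [h, div_pow, one_pow, one_div_mul_eq_div]

theorem integral_pow_mul_exp_neg_mul_Ioi (n : ℕ) {r : ℝ} (hr : 0 < r) (a : ℝ) :
    ∫ x in Set.Ioi a, x ^ n * exp (-(r * x)) =
      n ! / r ^ (n + 1) * exp (-(r * a)) * ∑ k ∈ range (n + 1), (r * a) ^ k / k ! := by
  have hshift : ∫ x in Set.Ioi a, x ^ n * exp (-(r * x)) =
      ∫ s in Set.Ioi 0, (s + a) ^ n * exp (-(r * (s + a))) := by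
    rw [← (measurePreserving_add_right volume a).setIntegral_preimage_emb
      (measurableEmbedding_addRight a), Set.preimage_add_const_Ioi, sub_self]
  have hexpand : ∀ s, (s + a) ^ n * exp (-(r * (s + a))) = ∑ k ∈ range (n + 1),
      exp (-(r * a)) * (n.choose k * a ^ k) * (s ^ (n - k) * exp (-(r * s))) := by
    intro s
    rw [add_comm, add_pow, sum_mul, mul_add, neg_add, exp_add]
    exact sum_congr rfl fun k _ => by ring
  simp_rw [hshift, hexpand]
  rw [integral_finsetSum _ fun k _ => (integrableOn_pow_mul_exp_neg_mul _ hr).const_mul _,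
    mul_sum]
  refine sum_congr rfl fun k hk => ?_
  have hkn : k ≤ n := Nat.lt_succ_iff.mp (mem_range.mp hk)
  rw [MeasureTheory.integral_const_mul, integral_pow_mul_exp_neg_mul_Ioi_zero _ hr]
  have hchoose := Nat.choose_mul_factorial_mul_factorial hkn
  have hpow : r ^ (n - k + 1) * r ^ k = r ^ (n + 1) := by rw [← pow_add]; congr 1; omega
  field_simp
  rw [← hpow, ← hchoose]
  push_cast
  ring

theorem monotone_integral_Ioo {g : ℝ → ℝ} (hg : Continuous g) (hg0 : ∀ y, 0 < y → 0 ≤ g y) :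
    Monotone fun u => ∫ y in Set.Ioo 0 u, g y := fun _ _ huv =>
  setIntegral_mono_set (hg.integrableOn_Icc.mono_set Set.Ioo_subset_Icc_self)
    (ae_restrict_of_forall_mem measurableSet_Ioo fun y hy => hg0 y hy.1)
    (Set.Ioo_subset_Ioo_right huv).eventuallyLE

theorem integral_Ioo_pow_mul_exp_neg_mul_le (p : ℕ) {c : ℝ} (hc : 0 < c) (u : ℝ) :
    ∫ y in Set.Ioo 0 u, y ^ p * exp (-(c * y)) ≤ p ! / c ^ (p + 1) := by
  rw [← integral_pow_mul_exp_neg_mul_Ioi_zero p hc]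
  exact setIntegral_mono_set (integrableOn_pow_mul_exp_neg_mul p hc)
    (ae_restrict_of_forall_mem measurableSet_Ioi fun y (hy : 0 < y) => by positivity)
    Set.Ioo_subset_Ioi_self.eventuallyLE

theorem integral_Ioo_pow_mul_exp_neg_mul_nonneg (p : ℕ) (c u : ℝ) :
    0 ≤ ∫ y in Set.Ioo 0 u, y ^ p * exp (-(c * y)) :=
  setIntegral_nonneg measurableSet_Ioo fun y hy => by have := hy.1; positivity

theorem integral_Ioi_mul_integral_Ioo_swap {f g : ℝ → ℝ} {β : ℝ} (hβ : 0 < β)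
    (hf : IntegrableOn f (Set.Ioi 0)) (hg : IntegrableOn g (Set.Ioi 0)) :
    ∫ x in Set.Ioi 0, f x * ∫ y in Set.Ioo 0 (β * x), g y =
      ∫ y in Set.Ioi 0, g y * ∫ x in Set.Ioi (y / β), f x := by
  set F := (Set.Ioi (0 : ℝ)).indicator f
  set G := (Set.Ioi (0 : ℝ)).indicator g
  set s : Set (ℝ × ℝ) := {q | 0 < q.2 ∧ q.2 < β * q.1}
  set Φ := s.indicator fun q => F q.1 * G q.2
  have hs : MeasurableSet s := (measurableSet_lt measurable_const measurable_snd).inter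
    (measurableSet_lt measurable_snd (measurable_fst.const_mul β))
  have hΦ : Integrable Φ (volume.prod volume) :=
    (((integrable_indicator_iff measurableSet_Ioi).2 hf).mul_prod
      ((integrable_indicator_iff measurableSet_Ioi).2 hg)).indicator hs
  have hleft : ∀ x, ∫ y, Φ (x, y) =
      (Set.Ioi 0).indicator (fun x => f x * ∫ y in Set.Ioo 0 (β * x), g y) x := by
    intro x
    by_cases hx : 0 < x
    · rw [Set.indicator_of_mem (Set.mem_Ioi.2 hx), ← MeasureTheory.integral_const_mul,
        ← MeasureTheory.integral_indicator measurableSet_Ioo]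
      congr 1 with y
      by_cases hy : y ∈ Set.Ioo 0 (β * x)
      · rw [Set.indicator_of_mem hy]
        simp [Φ, Set.indicator_of_mem (show (x, y) ∈ s from hy), F, G, hx, hy.1]
      · rw [Set.indicator_of_notMem hy]
        exact Set.indicator_of_notMem (show (x, y) ∉ s from hy) _
    · simp [Φ, F, hx, Set.indicator_apply]
  have hright : ∀ y, ∫ x, Φ (x, y) =
      (Set.Ioi 0).indicator (fun y => g y * ∫ x in Set.Ioi (y / β), f x) y := by
    intro y
    by_cases hy : 0 < y
    · rw [Set.indicator_of_mem (Set.mem_Ioi.2 hy), ← MeasureTheory.integral_const_mul,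
        ← MeasureTheory.integral_indicator measurableSet_Ioi]
      congr 1 with x
      by_cases hx : y / β < x
      · have hx0 : 0 < x := lt_trans (by positivity) hx
        have hyx : y < β * x := by rwa [div_lt_iff₀' hβ] at hx
        simp [Φ, s, F, G, hx, hx0, hy, hyx, mul_comm]
      · have hyx : ¬ y < β * x := by rwa [div_lt_iff₀' hβ] at hx
        simp [Φ, s, hx, hyx]
    · simp [Φ, G, hy, Set.indicator_apply]
  rw [← MeasureTheory.integral_indicator measurableSet_Ioi,
    ← MeasureTheory.integral_indicator measurableSet_Ioi]
  simp_rw [← hleft, ← hright]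
  exact integral_integral_swap hΦ

theorem ascPochhammer_eval_mul_add {S : Type*} [CommSemiring S] (x : S) (n : ℕ) :
    (ascPochhammer S n).eval x * (x + n) = x * (ascPochhammer S n).eval (x + 1) := by
  rw [← ascPochhammer_succ_eval, ascPochhammer_succ_left]
  simp

theorem ascPochhammer_eval_natCast_add_one_div_factorial (k n : ℕ) :
    (ascPochhammer ℝ n).eval ((k : ℝ) + 1) / n ! = (n + k).choose k := by
  rw [← Nat.cast_add_one, ← Nat.cast_ascFactorial, Nat.ascFactorial_eq_factorial_mul_choose,
    add_comm k n, Nat.choose_symm_add]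
  push_cast
  field_simp

theorem integral_pow_div_one_add_mul_pow (a k : ℕ) {c γ : ℝ} (hγ : 0 ≤ γ) (hcγ : |c * γ| < 1) :
    ∫ t in (0 : ℝ)..γ, t ^ a / (1 + c * t) ^ (k + 1) =
      γ ^ (a + 1) / ((a : ℝ) + 1) *
        hyp2F1 ((a : ℝ) + 1) ((k : ℝ) + 1) ((a : ℝ) + 2) (-(c * γ)) := by
  set F : ℕ → ℝ → ℝ := fun n t => (n + k).choose k * (-c) ^ n * t ^ (a + n)
  have hexpand : ∀ t ∈ Set.Ioc 0 γ, t ^ a / (1 + c * t) ^ (k + 1) = ∑' n, F n t := by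
    intro t ht
    have hct : ‖-(c * t)‖ < 1 := by
      rw [norm_neg, Real.norm_eq_abs]
      refine lt_of_le_of_lt ?_ hcγ
      rw [abs_mul, abs_mul, abs_of_pos ht.1, abs_of_nonneg hγ]
      exact mul_le_mul_of_nonneg_left ht.2 (abs_nonneg c)
    have h := (hasSum_choose_mul_geometric_of_norm_lt_one k hct).mul_left (t ^ a)
    rw [sub_neg_eq_add] at h
    rw [div_eq_mul_one_div, ← h.tsum_eq]
    exact tsum_congr fun n => by ring
  have hbound : ∀ n, ∀ᵐ t ∂(volume.restrict (Set.Ioc 0 γ)),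
      ‖F n t‖ ≤ (n + k).choose k * |c * γ| ^ n * γ ^ a := by
    intro n
    refine ae_restrict_of_forall_mem measurableSet_Ioc fun t ht => ?_
    have ht' : |t| ≤ γ := by rw [abs_of_pos ht.1]; exact ht.2
    calc ‖F n t‖ = (n + k).choose k * |c| ^ n * |t| ^ (a + n) := by
          simp only [F, norm_mul, norm_pow, norm_neg, Real.norm_eq_abs, Nat.abs_cast]
      _ ≤ (n + k).choose k * |c| ^ n * γ ^ (a + n) := by gcongr
      _ = (n + k).choose k * |c * γ| ^ n * γ ^ a := by
          rw [abs_mul, abs_of_nonneg hγ]; ring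
  have hsum : Summable fun n : ℕ => ((n + k).choose k : ℝ) * |c * γ| ^ n * γ ^ a :=
    (summable_choose_mul_geometric_of_norm_lt_one (R := ℝ) k
      (by rwa [Real.norm_eq_abs, abs_abs])).mul_right _
  rw [intervalIntegral.integral_of_le hγ, setIntegral_congr_fun measurableSet_Ioc hexpand,
    integral_tsum_of_norm_le_const (fun n => by fun_prop) hbound hsum, hyp2F1, ← tsum_mul_left]
  refine tsum_congr fun n => ?_
  rw [← intervalIntegral.integral_of_le hγ, intervalIntegral.integral_const_mul, integral_pow,
    ← ascPochhammer_eval_natCast_add_one_div_factorial]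
  have hrec : (ascPochhammer ℝ n).eval ((a : ℝ) + 1) * ((a : ℝ) + 1 + n) =
      ((a : ℝ) + 1) * (ascPochhammer ℝ n).eval ((a : ℝ) + 2) := by
    rw [ascPochhammer_eval_mul_add]; ring_nf
  have hpos := (ascPochhammer_pos n ((a : ℝ) + 2) (by positivity)).ne'
  rw [zero_pow (by omega), sub_zero]
  push_cast
  field_simp
  linear_combination
    -(ascPochhammer ℝ n).eval ((k : ℝ) + 1) * (-c) ^ n * γ ^ (a + n + 1) * hrec

noncomputable def triangleGammaIntegral (j p : ℕ) (r c β : ℝ) : ℝ :=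
  ∫ x in Set.Ioi 0, x ^ j * exp (-(r * x)) * ∫ y in Set.Ioo 0 (β * x), y ^ p * exp (-(c * y))

theorem triangleGammaIntegral_nonneg (j p : ℕ) (r c β : ℝ) :
    0 ≤ triangleGammaIntegral j p r c β :=
  setIntegral_nonneg measurableSet_Ioi fun x (hx : 0 < x) =>
    mul_nonneg (by positivity) (integral_Ioo_pow_mul_exp_neg_mul_nonneg p c _)

theorem triangleGammaIntegral_le (j p : ℕ) {r c : ℝ} (hr : 0 < r) (hc : 0 < c) (β : ℝ) :
    triangleGammaIntegral j p r c β ≤ p ! / c ^ (p + 1) * (j ! / r ^ (j + 1)) := by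
  rw [← integral_pow_mul_exp_neg_mul_Ioi_zero j hr, ← MeasureTheory.integral_const_mul]
  refine integral_mono_of_nonneg ?_ ((integrableOn_pow_mul_exp_neg_mul j hr).const_mul _) ?_
  · exact ae_restrict_of_forall_mem measurableSet_Ioi fun x (hx : 0 < x) =>
      mul_nonneg (by positivity) (integral_Ioo_pow_mul_exp_neg_mul_nonneg p c _)
  · refine ae_restrict_of_forall_mem measurableSet_Ioi fun x (hx : 0 < x) => ?_
    exact (mul_le_mul_of_nonneg_left (integral_Ioo_pow_mul_exp_neg_mul_le p hc _)
      (by positivity)).trans_eq (mul_comm _ _)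

theorem measurable_triangleGammaIntegral (j p : ℕ) (r c : ℝ) :
    Measurable fun β => triangleGammaIntegral j p r c β := by
  have hW : Measurable fun u => ∫ y in Set.Ioo 0 u, y ^ p * exp (-(c * y)) :=
    (monotone_integral_Ioo (by fun_prop) fun y hy => by positivity).measurable
  have hmeas : Measurable fun q : ℝ × ℝ =>
      q.2 ^ j * exp (-(r * q.2)) * ∫ y in Set.Ioo 0 (q.1 * q.2), y ^ p * exp (-(c * y)) :=
    (by fun_prop : Measurable fun q : ℝ × ℝ => q.2 ^ j * exp (-(r * q.2))).mul
      (hW.comp (measurable_fst.mul measurable_snd))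
  exact (hmeas.stronglyMeasurable.integral_prod_right'
    (ν := volume.restrict (Set.Ioi 0))).measurable

theorem triangleGammaIntegral_eq (j p : ℕ) {r c β : ℝ} (hr : 0 < r) (hc : 0 < c) (hβ : 0 < β) :
    triangleGammaIntegral j p r c β = j ! / r ^ (j + 1) *
      ∑ k ∈ range (j + 1),
        (p + k)! / k ! * (β / r) ^ (p + 1) / (1 + c * (β / r)) ^ (p + k + 1) := by
  have hcrβ : 0 < c + r / β := by positivity
  have hpt : ∀ y, y ^ p * exp (-(c * y)) * ∫ x in Set.Ioi (y / β), x ^ j * exp (-(r * x)) =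
      j ! / r ^ (j + 1) * ∑ k ∈ range (j + 1),
        (r / β) ^ k / k ! * (y ^ (p + k) * exp (-((c + r / β) * y))) := by
    intro y
    rw [integral_pow_mul_exp_neg_mul_Ioi j hr, mul_sum, mul_sum, mul_sum]
    refine sum_congr rfl fun k _ => ?_
    rw [show -((c + r / β) * y) = -(c * y) + -(r * (y / β)) by ring, exp_add]
    ring
  rw [triangleGammaIntegral, integral_Ioi_mul_integral_Ioo_swap hβ
    (integrableOn_pow_mul_exp_neg_mul j hr) (integrableOn_pow_mul_exp_neg_mul p hc)]
  simp_rw [hpt]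
  rw [MeasureTheory.integral_const_mul, integral_finsetSum _ fun k _ =>
    (integrableOn_pow_mul_exp_neg_mul _ hcrβ).const_mul _]
  congr 1
  refine sum_congr rfl fun k _ => ?_
  have hX : 0 < 1 + c * (β / r) := by positivity
  rw [MeasureTheory.integral_const_mul, integral_pow_mul_exp_neg_mul_Ioi_zero _ hcrβ,
    show c + r / β = r / β * (1 + c * (β / r)) by field_simp; ring]
  generalize 1 + c * (β / r) = X at hX ⊢
  rw [mul_pow, div_pow, div_pow, div_pow]
  field_simp
  ring

noncomputable def ricianCoeff (K : ℝ) (j : ℕ) : ℝ :=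
  (K + 1) * exp (-K) * (K * (K + 1)) ^ j / (j ! : ℝ) ^ 2

theorem ricianCoeff_nonneg {K : ℝ} (hK : 0 ≤ K) (j : ℕ) : 0 ≤ ricianCoeff K j := by
  rw [ricianCoeff]; positivity

theorem ricianCoeff_mul_factorial_div {K : ℝ} (hK : K + 1 ≠ 0) (j : ℕ) :
    ricianCoeff K j * (j ! / (K + 1) ^ (j + 1)) = exp (-K) * (K ^ j / j !) := by
  rw [ricianCoeff, mul_pow]
  field_simp
  ring

theorem summable_ricianCoeff_mul_factorial_div {K : ℝ} (hK : K + 1 ≠ 0) :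
    Summable fun j => ricianCoeff K j * (j ! / (K + 1) ^ (j + 1)) := by
  simp_rw [ricianCoeff_mul_factorial_div hK]
  exact (Real.summable_pow_div_factorial K).mul_left _

theorem fR_eq_tsum {K x : ℝ} (hK : 0 ≤ K) (hx : 0 < x) :
    fR K x = ∑' j, ricianCoeff K j * (x ^ j * exp (-((K + 1) * x))) := by
  rw [fR, if_pos hx, besselI0, ← tsum_mul_left]
  refine tsum_congr fun j => ?_
  rw [pow_mul, div_pow, sq_sqrt (by positivity),
    show 4 * K * (K + 1) * x / 2 ^ 2 = K * (K + 1) * x by ring, mul_pow, ricianCoeff,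
    show -K - (K + 1) * x = -K + -((K + 1) * x) by ring, exp_add]
  ring

theorem fG_natCast_add_one (p : ℕ) {y : ℝ} (hy : 0 < y) :
    fG ((p + 1 : ℕ) : ℝ) y =
      ((p + 1 : ℕ) : ℝ) ^ (p + 1) / p ! * (y ^ p * exp (-((p + 1 : ℕ) * y))) := by
  rw [fG, if_pos hy, Real.rpow_natCast, Nat.cast_add_one p, add_sub_cancel_right,
    Real.rpow_natCast, Real.Gamma_nat_eq_factorial, neg_mul]
  ring

theorem O_NL_eq_tsum (p : ℕ) {K : ℝ} (hK : 0 ≤ K) (β : ℝ) :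
    O_NL (p + 1) K β = ∑' j, ricianCoeff K j * (((p + 1 : ℕ) : ℝ) ^ (p + 1) / p !) *
      triangleGammaIntegral j p (K + 1) (p + 1 : ℕ) β := by
  set c : ℝ := ((p + 1 : ℕ) : ℝ)
  set C := c ^ (p + 1) / (p ! : ℝ)
  set W := fun u => ∫ y in Set.Ioo 0 u, y ^ p * exp (-(c * y))
  have hr : 0 < K + 1 := by linarith
  have hc : 0 < c := by positivity
  have hpt : ∀ x ∈ Set.Ioi 0, fR K x * ∫ y in Set.Ioo 0 (β * x), fG c y =
      ∑' j, ricianCoeff K j * C * (x ^ j * exp (-((K + 1) * x)) * W (β * x)) := by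
    intro x hx
    rw [fR_eq_tsum hK hx, ← tsum_mul_right, setIntegral_congr_fun measurableSet_Ioo
      fun y hy => fG_natCast_add_one p hy.1, MeasureTheory.integral_const_mul]
    exact tsum_congr fun j => by ring
  have hW : Measurable W :=
    (monotone_integral_Ioo (by fun_prop) fun y hy => by positivity).measurable
  rw [O_NL, setIntegral_congr_fun measurableSet_Ioi hpt, integral_tsum_of_norm_le
    (G := fun j x => ricianCoeff K j * C * (p ! / c ^ (p + 1)) * (x ^ j * exp (-((K + 1) * x))))]
  · exact tsum_congr fun j => by rw [MeasureTheory.integral_const_mul]; rfl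
  · exact fun j => (((by fun_prop : Measurable fun x : ℝ => x ^ j * exp (-((K + 1) * x))).mul
      (hW.comp (measurable_const_mul β))).const_mul _).aestronglyMeasurable
  · exact fun j => (integrableOn_pow_mul_exp_neg_mul j hr).const_mul _
  · refine fun j => ae_restrict_of_forall_mem measurableSet_Ioi fun x (hx : 0 < x) => ?_
    have hW0 := integral_Ioo_pow_mul_exp_neg_mul_nonneg p c (β * x)
    have hCj : 0 ≤ ricianCoeff K j * C := mul_nonneg (ricianCoeff_nonneg hK j) (by positivity)
    rw [Real.norm_of_nonneg (by positivity), mul_assoc _ (p ! / c ^ (p + 1)),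
      mul_comm (p ! / c ^ (p + 1))]
    gcongr
    exact integral_Ioo_pow_mul_exp_neg_mul_le p hc _
  · simp_rw [MeasureTheory.integral_const_mul, integral_pow_mul_exp_neg_mul_Ioi_zero _ hr]
    exact ((summable_ricianCoeff_mul_factorial_div hr.ne').mul_left (C * (p ! / c ^ (p + 1)))).congr
      fun j => by ring

theorem integral_O_NL_comp_mul_eq_tsum (p : ℕ) {K γ : ℝ} (hK : 0 ≤ K) (hγ : 0 ≤ γ) (α : ℝ) :
    ∫ t in (0 : ℝ)..γ, O_NL (p + 1) K (α * t) =
      ∑' j, ricianCoeff K j * (((p + 1 : ℕ) : ℝ) ^ (p + 1) / p !) *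
        ∫ t in (0 : ℝ)..γ, triangleGammaIntegral j p (K + 1) (p + 1 : ℕ) (α * t) := by
  set c : ℝ := ((p + 1 : ℕ) : ℝ)
  set C := c ^ (p + 1) / (p ! : ℝ)
  have hr : 0 < K + 1 := by linarith
  have hc : 0 < c := by positivity
  simp_rw [O_NL_eq_tsum p hK]
  rw [intervalIntegral.integral_of_le hγ, integral_tsum_of_norm_le_const
    (M := fun j => ricianCoeff K j * C * (p ! / c ^ (p + 1) * (j ! / (K + 1) ^ (j + 1))))]
  · exact tsum_congr fun j => by
      rw [MeasureTheory.integral_const_mul, intervalIntegral.integral_of_le hγ]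
  · exact fun j => (((measurable_triangleGammaIntegral j p _ c).comp
      (measurable_const_mul α)).const_mul _).aestronglyMeasurable
  · refine fun j => Filter.Eventually.of_forall fun t => ?_
    have hCj : 0 ≤ ricianCoeff K j * C := mul_nonneg (ricianCoeff_nonneg hK j) (by positivity)
    rw [Real.norm_of_nonneg (mul_nonneg hCj (triangleGammaIntegral_nonneg _ _ _ _ _))]
    exact mul_le_mul_of_nonneg_left (triangleGammaIntegral_le j p hr hc _) hCj
  · exact ((summable_ricianCoeff_mul_factorial_div hr.ne').mul_left (C * (p ! / c ^ (p + 1)))).congr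
      fun j => by ring

theorem integral_triangleGammaIntegral_comp_mul (j p : ℕ) {r c α γ : ℝ} (hr : 0 < r) (hc : 0 < c)
    (hα : 0 < α) (hγ : 0 ≤ γ) (hlt : c * α * γ < r) :
    ∫ t in (0 : ℝ)..γ, triangleGammaIntegral j p r c (α * t) =
      j ! / r ^ (j + 1) * (α / r) ^ (p + 1) * (γ ^ (p + 1 + 1) / (((p + 1 : ℕ) : ℝ) + 1)) *
        ∑ k ∈ range (j + 1), (p + k)! / k ! *
          hyp2F1 (((p + 1 : ℕ) : ℝ) + 1) (((p + 1 : ℕ) : ℝ) + k) (((p + 1 : ℕ) : ℝ) + 2)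
            (-(c * α * γ) / r) := by
  have hcγ : |c * α / r * γ| < 1 := by
    rw [abs_of_nonneg (by positivity), div_mul_eq_mul_div, div_lt_one hr]
    exact hlt
  have hclosed : ∀ t ∈ Set.Ioc 0 γ, triangleGammaIntegral j p r c (α * t) =
      j ! / r ^ (j + 1) * ∑ k ∈ range (j + 1),
        (p + k)! / k ! * (α / r) ^ (p + 1) * (t ^ (p + 1) / (1 + c * α / r * t) ^ (p + k + 1)) := by
    intro t ht
    rw [triangleGammaIntegral_eq j p hr hc (mul_pos hα ht.1)]
    refine congrArg _ (sum_congr rfl fun k _ => ?_)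
    rw [show c * (α * t / r) = c * α / r * t by ring]
    ring
  have hint : ∀ k, IntervalIntegrable (fun t => t ^ (p + 1) / (1 + c * α / r * t) ^ (p + k + 1))
      volume 0 γ := by
    intro k
    refine ContinuousOn.intervalIntegrable fun t ht => ContinuousAt.continuousWithinAt ?_
    have ht0 : 0 ≤ t := by rw [Set.uIcc_of_le hγ] at ht; exact ht.1
    fun_prop (disch := positivity)
  rw [intervalIntegral.integral_of_le hγ, setIntegral_congr_fun measurableSet_Ioc hclosed,
    ← intervalIntegral.integral_of_le hγ, intervalIntegral.integral_const_mul,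
    intervalIntegral.integral_finsetSum fun k _ => (hint k).const_mul _, mul_sum, mul_sum]
  refine sum_congr rfl fun k _ => ?_
  rw [intervalIntegral.integral_const_mul, integral_pow_div_one_add_mul_pow (p + 1) (p + k) hγ hcγ,
    show ((p + k : ℕ) : ℝ) + 1 = ((p + 1 : ℕ) : ℝ) + k by push_cast; ring,
    show -(c * α / r * γ) = -(c * α * γ) / r by ring]
  ring

/-- Theorem 1, closed form of `H_L(α, γ) = ∫₀^γ O_{N,L}(α t) dt` (LoS interference case). -/
theorem H_L_closed_form
    (m : ℕ) (hm : 0 < m) (K α γ : ℝ) (hK : 0 ≤ K) (hα : 0 < α) (hγ : 0 < γ)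
    (hlt : (m : ℝ) * α * γ < K + 1) :
    (∫ t in (0 : ℝ)..γ, O_NL m K (α * t)) =
      (Real.exp (-K) * ((m : ℝ) * α) ^ (m : ℕ) * γ ^ (m + 1) /
          (Real.Gamma m * (K + 1) ^ (m : ℕ) * ((m : ℝ) + 1))) *
        ∑' j : ℕ, (K ^ j / (Nat.factorial j : ℝ)) *
          ∑ k ∈ Finset.range (j + 1),
            (Real.Gamma ((k : ℝ) + m) / (Nat.factorial k : ℝ)) *
              hyp2F1 ((m : ℝ) + 1) ((m : ℝ) + k) ((m : ℝ) + 2)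
                (-((m : ℝ) * α * γ) / (K + 1)) := by
  obtain ⟨p, rfl⟩ := Nat.exists_eq_add_one_of_ne_zero hm.ne'
  have hr : 0 < K + 1 := by linarith
  have hΓm : Real.Gamma ((p + 1 : ℕ) : ℝ) = p ! := by
    rw [Nat.cast_add_one, Real.Gamma_nat_eq_factorial]
  have hΓ : ∀ k : ℕ, Real.Gamma ((k : ℝ) + ((p + 1 : ℕ) : ℝ)) = (p + k)! := fun k => by
    rw [show (k : ℝ) + ((p + 1 : ℕ) : ℝ) = ((p + k : ℕ) : ℝ) + 1 by push_cast; ring,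
      Real.Gamma_nat_eq_factorial]
  rw [integral_O_NL_comp_mul_eq_tsum p hK hγ.le, ← tsum_mul_left]
  refine tsum_congr fun j => ?_
  rw [integral_triangleGammaIntegral_comp_mul j p hr (by positivity) hα hγ.le hlt]
  simp_rw [hΓ]
  rw [hΓm]
  have key := ricianCoeff_mul_factorial_div hr.ne' j
  generalize K + 1 = r at key ⊢
  rw [div_mul_eq_div_div]
  linear_combination (((p + 1 : ℕ) : ℝ) ^ (p + 1) / p ! * (α / r) ^ (p + 1) *
    (γ ^ (p + 1 + 1) / (((p + 1 : ℕ) : ℝ) + 1)) *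
    ∑ k ∈ range (j + 1), (p + k)! / k ! * hyp2F1 (((p + 1 : ℕ) : ℝ) + 1) (((p + 1 : ℕ) : ℝ) + k)
      (((p + 1 : ℕ) : ℝ) + 2) (-(((p + 1 : ℕ) : ℝ) * α * γ) / r)) * key
end
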